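/- For N ~ Poisson(μ) and X₁,...,Xₙ i.i.d. ~ p given N = n, with A measurable and q = p(A): the point counts in A and in Aᶜ are independent Poisson random variables with means μ·q and μ·(1−q) respectively. -/

import Mathlib

/-!
Given `N = n`, the number of points in `A` is binomial `B(n, q)` and the number in `Aᶜ` is the
rest, so only `n = m + l` contributes to the sum, with weight
`e^{-μ} μ^{m+l}/(m+l)! · (m+l)!/(m! l!) · q^m (1-q)^l`. Splitting `e^{-μ} = e^{-μq} e^{-μ(1-q)}`
and `μ^{m+l} = μ^m μ^l` turns this into the product of the two Poisson weights.
-/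

open MeasureTheory ProbabilityTheory Finset Classical
open scoped NNReal ENNReal Nat

section Counts

variable {ι T : Type*} [Fintype ι]

lemma card_filter_mem_add_card_filter_mem_compl (A : Set T) (x : ι → T) :
    #(univ.filter fun i => x i ∈ A) + #(univ.filter fun i => x i ∈ Aᶜ) = Fintype.card ι :=
  card_filter_add_card_filter_not _

lemma setOf_filter_mem_eq_pi (A : Set T) (s : Finset ι) :
    {x : ι → T | univ.filter (fun i => x i ∈ A) = s} =
      Set.univ.pi fun i => if i ∈ s then A else Aᶜ := by
  ext x
  simp only [Set.mem_ofPred_eq, Set.mem_univ_pi, Finset.ext_iff, mem_filter, mem_univ, true_and]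
  refine forall_congr' fun i => ?_
  split_ifs with hi <;> simp [hi]

lemma measure_pi_filter_mem_eq [MeasurableSpace T] (μ : Measure T) [SigmaFinite μ] (A : Set T)
    (s : Finset ι) :
    Measure.pi (fun _ => μ) {x : ι → T | univ.filter (fun i => x i ∈ A) = s} =
      μ A ^ #s * μ Aᶜ ^ (Fintype.card ι - #s) := by
  rw [setOf_filter_mem_eq_pi, Measure.pi_pi]
  simp_rw [apply_ite μ]
  rw [prod_ite, prod_const, prod_const, filter_mem_eq_inter, univ_inter, filter_not,
    filter_mem_eq_inter, univ_inter, card_sdiff_of_subset (subset_univ s), card_univ]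

lemma measure_pi_card_filter_mem_eq [MeasurableSpace T] (μ : Measure T) [SigmaFinite μ]
    {A : Set T} (hA : MeasurableSet A) (m : ℕ) :
    Measure.pi (fun _ => μ) {x : ι → T | #(univ.filter fun i => x i ∈ A) = m} =
      (Fintype.card ι).choose m * μ A ^ m * μ Aᶜ ^ (Fintype.card ι - m) := by
  set f : (ι → T) → Finset ι := fun x => univ.filter fun i => x i ∈ A
  have hfibre : ∀ s, MeasurableSet (f ⁻¹' {s}) := fun s => by
    change MeasurableSet {x | f x = s}
    rw [setOf_filter_mem_eq_pi]
    exact .univ_pi fun i => by split_ifs; exacts [hA, hA.compl]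
  have hset : {x | #(f x) = m} = f ⁻¹' ↑(powersetCard m (univ : Finset ι)) := by
    ext x; simp
  have hfibre_measure : ∀ s ∈ powersetCard m (univ : Finset ι),
      Measure.pi (fun _ => μ) (f ⁻¹' {s}) = μ A ^ m * μ Aᶜ ^ (Fintype.card ι - m) := by
    intro s hs
    rw [← (mem_powersetCard.1 hs).2]
    exact measure_pi_filter_mem_eq μ A s
  rw [hset, ← sum_measure_preimage_singleton _ fun s _ => hfibre s, sum_congr rfl hfibre_measure,
    sum_const, card_powersetCard, card_univ, nsmul_eq_mul, mul_assoc]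

lemma measure_pi_card_filter_mem_and_compl_eq [MeasurableSpace T] (μ : Measure T) [SigmaFinite μ]
    {A : Set T} (hA : MeasurableSet A) (m l : ℕ) :
    Measure.pi (fun _ => μ) {x : ι → T | #(univ.filter fun i => x i ∈ A) = m ∧
        #(univ.filter fun i => x i ∈ Aᶜ) = l} =
      if Fintype.card ι = m + l then (m + l).choose m * μ A ^ m * μ Aᶜ ^ l else 0 := by
  have hsum := card_filter_mem_add_card_filter_mem_compl (ι := ι) A
  split_ifs with hcard
  · have hbinom := measure_pi_card_filter_mem_eq (ι := ι) μ hA m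
    rw [hcard, Nat.add_sub_cancel_left] at hbinom
    rw [← hbinom]
    congr 1
    ext x
    have hx := hsum x
    simp only [Set.mem_ofPred_eq, and_iff_left_iff_imp]
    omega
  · convert measure_empty (μ := Measure.pi fun _ => μ)
    refine Set.eq_empty_of_forall_notMem fun x ⟨hm, hl⟩ => hcard ?_
    rw [← hsum x, hm, hl]

end Counts

set_option linter.deprecated false in
lemma poissonPMF_mul_poissonPMF (r : ℝ≥0) {q : ℝ≥0} (hq : q ≤ 1) (m l : ℕ) :
    poissonPMF (r * q) m * poissonPMF (r * (1 - q)) l =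
      poissonPMF r (m + l) *
        ((m + l).choose m * (q : ℝ≥0∞) ^ m * ((1 - q : ℝ≥0) : ℝ≥0∞) ^ l) := by
  have hbinom : ((m + l).choose m * (q : ℝ≥0∞) ^ m * ((1 - q : ℝ≥0) : ℝ≥0∞) ^ l) =
      ENNReal.ofReal ((m + l).choose m * q ^ m * (1 - q) ^ l : ℝ≥0) := by
    rw [ENNReal.ofReal_coe_nnreal]
    push_cast
    rfl
  simp only [← poissonPMFReal_ofReal_eq_poissonPMF, poissonPMFReal, hbinom]
  rw [← ENNReal.ofReal_mul (by positivity), ← ENNReal.ofReal_mul (by positivity)]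
  congr 1
  have hexp : Real.exp (-r) = Real.exp (-(r * q)) * Real.exp (-(r * (1 - q))) := by
    rw [← Real.exp_add]; ring_nf
  push_cast [NNReal.coe_sub hq, Nat.cast_add_choose]
  rw [hexp, mul_pow, mul_pow, pow_add]
  field_simp

open MeasureTheory ProbabilityTheory Finset Classical in
/-- Independent Poisson splitting: with `N ~ Poisson(μ)` and, given `N = n`, `X₁,...,Xₙ`
i.i.d. with distribution `p`, and `A` measurable with `q = p(A)`, the counts of points in
`A` and in `Aᶜ` are independent Poisson random variables with means `μ·q` and `μ·(1−q)`:
their joint law factorizes as the product of the two Poisson pmfs. -/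
theorem poisson_splitting {T : Type*} [MeasurableSpace T]
    (μr : NNReal) (p : Measure T) [IsProbabilityMeasure p]
    (A : Set T) (hA : MeasurableSet A) (q : NNReal) (hq : (q : ENNReal) = p A) :
    ∀ m l : ℕ,
      (∑' n : ℕ, poissonPMF μr n *
        (Measure.pi fun _ : Fin n => p)
          {x : Fin n → T | (Finset.univ.filter fun i => x i ∈ A).card = m
            ∧ (Finset.univ.filter fun i => x i ∈ Aᶜ).card = l})
        = poissonPMF (μr * q) m * poissonPMF (μr * (1 - q)) l := by
  intro m l
  have hq_le_one : q ≤ 1 := by exact_mod_cast hq ▸ prob_le_one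
  have hcompl : p Aᶜ = ((1 - q : ℝ≥0) : ℝ≥0∞) := by
    rw [prob_compl_eq_one_sub hA, ← hq, ENNReal.coe_sub, ENNReal.coe_one]
  simp_rw [measure_pi_card_filter_mem_and_compl_eq p hA, Fintype.card_fin, mul_ite, mul_zero]
  rw [tsum_ite_eq, ← hq, hcompl, poissonPMF_mul_poissonPMF μr hq_le_one]
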